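/- Fix a positive integer k and τ in the upper half-plane. If μ_1, …, μ_r ∈ M* are such that μ_i − μ_j ∉ kM whenever i ≠ j, then the functions v ↦ Θ_{μ_1,k}(v;τ), …, v ↦ Θ_{μ_r,k}(v;τ) on V_ℂ are linearly independent over ℂ. -/

import Mathlib

open scoped BigOperators InnerProductSpace
open Complex Filter

noncomputable section

abbrev Evec (l : ℕ) := EuclideanSpace ℝ (Fin l)
abbrev EvecC (l : ℕ) := EuclideanSpace ℂ (Fin l)

/-- Inclusion of the real Euclidean space into its complexification. -/
def toC {l : ℕ} (x : Evec l) : EvecC l := WithLp.toLp 2 (fun i => (x i : ℂ))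

/-- The complex-bilinear extension of the standard real inner product. -/
def cbil {l : ℕ} (v w : EvecC l) : ℂ := ∑ i, v i * w i

/-- The full-rank lattice spanned over `ℤ` by the `ℝ`-basis `b`. -/
def latt {l : ℕ} (b : Module.Basis (Fin l) ℝ (Evec l)) : Set (Evec l) :=
  {x | ∃ c : Fin l → ℤ, x = ∑ i, c i • b i}

/-- The dual lattice `M* = {x | ⟪x, β⟫ ∈ ℤ for all β ∈ M}`. -/
def dualLatt {l : ℕ} (b : Module.Basis (Fin l) ℝ (Evec l)) : Set (Evec l) :=
  {x | ∀ β ∈ latt b, ∃ n : ℤ, ⟪x, β⟫_ℝ = (n : ℝ)}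

/-- The lattice point `γ = (1/k)·μ + Σᵢ cᵢ·bᵢ` of the coset `(1/k)μ + M`. -/
def gam {l : ℕ} (b : Module.Basis (Fin l) ℝ (Evec l)) (k : ℕ) (μ : Evec l)
    (c : Fin l → ℤ) : Evec l :=
  (k : ℝ)⁻¹ • μ + ∑ i, c i • b i

/-- The summand of the theta series `Θ_{μ,k}`, indexed by `γ ∈ (1/k)μ + M`. -/
def thetaTerm {l : ℕ} (b : Module.Basis (Fin l) ℝ (Evec l)) (k : ℕ) (μ : Evec l)
    (τ : ℂ) (v : EvecC l) (c : Fin l → ℤ) : ℂ :=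
  Complex.exp (2 * (Real.pi : ℂ) * Complex.I * (k : ℂ) * cbil (toC (gam b k μ c)) v
    + (Real.pi : ℂ) * Complex.I * (k : ℂ) * τ * (⟪gam b k μ c, gam b k μ c⟫_ℝ : ℂ)
    - (Real.pi : ℂ) * Complex.I * τ / (k : ℂ) * (⟪μ, μ⟫_ℝ : ℂ))

/-- The theta function `Θ_{μ,k}(v; τ)`. -/
def theta {l : ℕ} (b : Module.Basis (Fin l) ℝ (Evec l)) (k : ℕ) (μ : Evec l)
    (τ : ℂ) (v : EvecC l) : ℂ :=
  ∑' c : Fin l → ℤ, thetaTerm b k μ τ v c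

/-!
Write `e(x) = exp (2πix)`. On a real line `t ↦ t • u`, each `Θ_{μ,k}` is an absolutely convergent
trigonometric series `∑_γ a_γ e(k⟪γ, u⟫ t)` whose coefficients decay like a Gaussian in `γ`, and
the Bohr mean `lim_{T → ∞} T⁻¹ ∫₀ᵀ` of such a series is the sum of its coefficients of
frequency `0`. Multiply a vanishing combination `∑ g_i Θ_{μ_i,k}` by `e(-⟪μ_{i₀}, u⟫ t)`: its
frequencies become `⟪kγ - μ_{i₀}, u⟫` for `γ ∈ μ_i/k + M`, and `kγ - μ_{i₀} ∈ μ_i - μ_{i₀} + kM`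
vanishes only for `i = i₀`, `γ = μ_{i₀}/k`. By Baire, `u` can be chosen orthogonal to none of the
countably many nonzero vectors `kγ - μ_{i₀}`; then the Bohr mean of `0` is `g_{i₀}` times a
nonzero Gaussian factor, so `g_{i₀} = 0`.
-/

open Real Topology

lemma norm_cexp_two_pi_I_mul_mul (ω t : ℝ) : ‖cexp (2 * π * I * ω * t)‖ = 1 := by
  rw [show 2 * π * I * ω * t = ((2 * π * ω * t : ℝ) : ℂ) * I by push_cast; ring]
  exact norm_exp_ofReal_mul_I _

lemma tendsto_average_cexp (ω : ℝ) :
    Tendsto (fun T : ℝ => (T : ℂ)⁻¹ * ∫ t in (0 : ℝ)..T, cexp (2 * π * I * ω * t)) atTop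
      (𝓝 (if ω = 0 then 1 else 0)) := by
  split_ifs with hω
  · refine tendsto_const_nhds.congr' ?_
    filter_upwards [eventually_ne_atTop 0] with T hT
    simp [hω, hT]
  · have hc : 2 * π * I * ω ≠ 0 := by simp [pi_ne_zero, I_ne_zero, hω]
    have hbound : ∀ T : ℝ, 0 < T → ‖(T : ℂ)⁻¹ * ∫ t in (0 : ℝ)..T, cexp (2 * π * I * ω * t)‖
        ≤ T⁻¹ * (2 / ‖2 * π * I * ω‖) := by
      intro T hT
      rw [integral_exp_mul_complex hc, norm_mul, norm_inv, norm_real, norm_of_nonneg hT.le,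
        norm_div]
      gcongr
      calc ‖cexp (2 * π * I * ω * T) - cexp (2 * π * I * ω * (0 : ℝ))‖
          ≤ ‖cexp (2 * π * I * ω * T)‖ + ‖cexp (2 * π * I * ω * (0 : ℝ))‖ := norm_sub_le _ _
        _ = 2 := by rw [norm_cexp_two_pi_I_mul_mul, norm_cexp_two_pi_I_mul_mul]; norm_num
    rw [tendsto_zero_iff_norm_tendsto_zero]
    refine squeeze_zero' (Eventually.of_forall fun _ => norm_nonneg _) ?_
      (by simpa only [zero_mul] using tendsto_inv_atTop_zero.mul_const (2 / ‖2 * π * I * ω‖))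
    filter_upwards [eventually_gt_atTop 0] with T hT using hbound T hT

section BohrMean

variable {ι : Type*} [Countable ι] {a : ι → ℂ} (ω : ι → ℝ)

lemma intervalIntegral_tsum_cexp (ha : Summable fun n => ‖a n‖) (T : ℝ) :
    ∫ t in (0 : ℝ)..T, ∑' n, a n * cexp (2 * π * I * ω n * t)
      = ∑' n, a n * ∫ t in (0 : ℝ)..T, cexp (2 * π * I * ω n * t) := by
  have hnorm : ∀ n (t : ℝ), ‖a n * cexp (2 * π * I * ω n * t)‖ = ‖a n‖ := fun n t => by
    rw [norm_mul, norm_cexp_two_pi_I_mul_mul, mul_one]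
  have hsum := intervalIntegral.hasSum_integral_of_dominated_convergence
    (F := fun n (t : ℝ) => a n * cexp (2 * π * I * ω n * t)) (μ := MeasureTheory.volume)
    (a := 0) (b := T) (fun n _ => ‖a n‖)
    (fun n => (by fun_prop : Continuous _).aestronglyMeasurable)
    (fun n => Eventually.of_forall fun t _ => (hnorm n t).le)
    (Eventually.of_forall fun _ _ => ha) intervalIntegrable_const
    (Eventually.of_forall fun t _ => (ha.of_norm_bounded fun n => (hnorm n t).le).hasSum)
  rw [← hsum.tsum_eq]
  exact tsum_congr fun n => intervalIntegral.integral_const_mul _ _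

lemma tendsto_average_tsum_cexp (ha : Summable fun n => ‖a n‖) :
    Tendsto (fun T : ℝ => (T : ℂ)⁻¹ * ∫ t in (0 : ℝ)..T, ∑' n, a n * cexp (2 * π * I * ω n * t))
      atTop (𝓝 (∑' n, if ω n = 0 then a n else 0)) := by
  simp_rw [intervalIntegral_tsum_cexp ω ha, ← tsum_mul_left]
  refine tendsto_tsum_of_dominated_convergence ha (fun n => ?_) ?_
  · simpa [mul_left_comm _ (a n), mul_ite] using (tendsto_average_cexp (ω n)).const_mul (a n)
  · filter_upwards [eventually_gt_atTop 0] with T hT n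
    rw [mul_left_comm, norm_mul]
    refine mul_le_of_le_one_right (norm_nonneg _) ?_
    rw [norm_mul, norm_inv, norm_real, norm_of_nonneg hT.le, inv_mul_le_one₀ hT]
    simpa [abs_of_pos hT] using intervalIntegral.norm_integral_le_of_norm_le_const
      (a := 0) (b := T) (C := 1) fun t _ => (norm_cexp_two_pi_I_mul_mul (ω n) t).le

lemma eq_zero_of_tsum_cexp_eq_zero (ha : Summable fun n => ‖a n‖) {n₀ : ι}
    (hω : ∀ n, ω n = 0 ↔ n = n₀) (h : ∀ t : ℝ, ∑' n, a n * cexp (2 * π * I * ω n * t) = 0) :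
    a n₀ = 0 := by
  have := tendsto_average_tsum_cexp ω ha
  simp only [h, intervalIntegral.integral_zero, mul_zero] at this
  rw [tsum_eq_single n₀ fun n hn => if_neg ((hω n).not.mpr hn), if_pos ((hω n₀).mpr rfl)] at this
  exact (tendsto_nhds_unique tendsto_const_nhds this).symm

end BohrMean

lemma exists_inner_ne_zero {E : Type*} [NormedAddCommGroup E] [InnerProductSpace ℝ E]
    [CompleteSpace E] {ι : Type*} [Countable ι] (d : ι → E) :
    ∃ u : E, ∀ i, d i ≠ 0 → ⟪d i, u⟫_ℝ ≠ 0 := by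
  by_contra! h
  let K : {i // d i ≠ 0} → Submodule ℝ E := fun i => LinearMap.ker (innerSL ℝ (d i : E) : E →ₗ[ℝ] ℝ)
  have hcover : ⋃ i, (K i : Set E) = Set.univ :=
    Set.eq_univ_of_forall fun u => by
      obtain ⟨i, hi, hiu⟩ := h u
      exact Set.mem_iUnion.mpr ⟨⟨i, hi⟩, hiu⟩
  obtain ⟨i, hi⟩ := nonempty_interior_of_iUnion_of_closed
    (f := fun i => (K i : Set E)) (fun i => (innerSL ℝ (d i : E)).isClosed_ker) hcover
  have hdi : d i ∈ K i := (K i).eq_top_of_nonempty_interior' hi ▸ Submodule.mem_top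
  exact i.2 (inner_self_eq_zero.mp hdi)

lemma exp_neg_mul_sq_le (n : ℕ) {A : ℝ} (hA : 0 < A) {y : ℝ} (hy : 0 < y) :
    rexp (-A * y ^ 2) ≤ n.factorial / A ^ n * y⁻¹ ^ (2 * n) := by
  have h := Real.pow_div_factorial_le_exp (A * y ^ 2) (by positivity) n
  calc rexp (-A * y ^ 2) = (rexp (A * y ^ 2))⁻¹ := by rw [← Real.exp_neg, neg_mul]
    _ ≤ ((A * y ^ 2) ^ n / n.factorial)⁻¹ := inv_anti₀ (by positivity) h
    _ = n.factorial / A ^ n * y⁻¹ ^ (2 * n) := by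
      rw [inv_div, pow_mul, mul_pow, inv_pow, inv_pow, ← pow_mul]
      field_simp

lemma ZLattice.summable_exp_neg_mul_norm_sub_sq {E : Type*} [NormedAddCommGroup E]
    [NormedSpace ℝ E] [FiniteDimensional ℝ E] (L : Submodule ℤ E) [DiscreteTopology L]
    {A : ℝ} (hA : 0 < A) (x : E) :
    Summable fun z : L => rexp (-A * ‖(z : E) - x‖ ^ 2) := by
  set n := Module.finrank ℤ L + 1
  refine Summable.of_norm_bounded_eventually
    ((ZLattice.summable_norm_sub_inv_pow L (2 * n) (by omega) x).mul_left (n.factorial / A ^ n)) ?_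
  have hx : {z : L | (z : E) = x}.Subsingleton := fun z hz w hw => Subtype.ext (hz.trans hw.symm)
  refine hx.finite.subset fun z hz => ?_
  by_contra hzx
  exact hz (by simpa using exp_neg_mul_sq_le n hA (norm_pos_iff.mpr (sub_ne_zero.mpr hzx)))

section IntegerCombinations

variable {ι E : Type*} [Fintype ι] [AddCommGroup E] [Module ℝ E] (b : Module.Basis ι ℝ E)

lemma Module.Basis.coe_restrictScalars_equivFun_symm (c : ι → ℤ) :
    ((b.restrictScalars ℤ).equivFun.symm c : E) = ∑ i, c i • b i := by
  simp [Module.Basis.equivFun_symm_apply]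

lemma Module.Basis.sum_zsmul_eq_zero_iff {c : ι → ℤ} : ∑ i, c i • b i = 0 ↔ c = 0 := by
  rw [← b.coe_restrictScalars_equivFun_symm, ZeroMemClass.coe_eq_zero,
    LinearEquiv.map_eq_zero_iff]

end IntegerCombinations

lemma cbil_toC {l : ℕ} (a x : Evec l) : cbil (toC a) (toC x) = ⟪a, x⟫_ℝ := by
  simp [cbil, toC, PiLp.inner_apply, mul_comm]

/-- `thetaTerm` without its `v`-dependent factor `exp (2πik⟪γ, v⟫)`. -/
def thetaCoeff {l : ℕ} (b : Module.Basis (Fin l) ℝ (Evec l)) (k : ℕ) (μ : Evec l)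
    (τ : ℂ) (c : Fin l → ℤ) : ℂ :=
  cexp (π * I * k * τ * ⟪gam b k μ c, gam b k μ c⟫_ℝ - π * I * τ / k * ⟪μ, μ⟫_ℝ)

section ThetaExpansion

variable {l : ℕ} (b : Module.Basis (Fin l) ℝ (Evec l)) (k : ℕ) (μ : Evec l) (τ : ℂ)

lemma smul_gam (hk : k ≠ 0) (c : Fin l → ℤ) :
    (k : ℝ) • gam b k μ c = μ + (k : ℝ) • ∑ i, c i • b i := by
  rw [gam, smul_add, smul_inv_smul₀ (Nat.cast_ne_zero.mpr hk)]

lemma exists_mem_latt_of_smul_gam_eq (hk : k ≠ 0) {c : Fin l → ℤ} {ν : Evec l}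
    (h : (k : ℝ) • gam b k μ c = ν) : ∃ β ∈ latt b, μ - ν = (k : ℝ) • β := by
  refine ⟨∑ i, (-c) i • b i, ⟨-c, rfl⟩, ?_⟩
  simp [← h, smul_gam b k μ hk, neg_smul, Finset.sum_neg_distrib]

lemma theta_toC_smul_mul_cexp (ν u : Evec l) (t : ℝ) :
    theta b k μ τ (toC (t • u)) * cexp (2 * π * I * (-⟪ν, u⟫_ℝ : ℝ) * t)
      = ∑' c, thetaCoeff b k μ τ c * cexp (2 * π * I * ⟪(k : ℝ) • gam b k μ c - ν, u⟫_ℝ * t) := by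
  rw [theta, ← tsum_mul_right]
  refine tsum_congr fun c => ?_
  rw [thetaTerm, thetaCoeff, mul_assoc, ← Complex.exp_add, ← Complex.exp_add, cbil_toC,
    inner_sub_left, real_inner_smul_left, real_inner_smul_right]
  push_cast
  ring_nf

lemma norm_thetaCoeff (c : Fin l → ℤ) :
    ‖thetaCoeff b k μ τ c‖
      = rexp (π * τ.im / k * ‖μ‖ ^ 2) * rexp (-(π * k * τ.im) * ‖gam b k μ c‖ ^ 2) := by
  rw [thetaCoeff, Complex.norm_exp, ← Real.exp_add, real_inner_self_eq_norm_sq,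
    real_inner_self_eq_norm_sq]
  congr 1
  simp only [sub_re, mul_re, mul_im, div_natCast_re, ofReal_re, ofReal_im, I_re, I_im, natCast_re,
    natCast_im]
  ring

lemma summable_norm_thetaCoeff (hk : 0 < k) (hτ : 0 < τ.im) :
    Summable fun c => ‖thetaCoeff b k μ τ c‖ := by
  simp_rw [norm_thetaCoeff]
  refine Summable.mul_left _ ?_
  have := ZLattice.summable_exp_neg_mul_norm_sub_sq (Submodule.span ℤ (Set.range b))
    (by positivity : 0 < π * k * τ.im) (-((k : ℝ)⁻¹ • μ))
  refine ((b.restrictScalars ℤ).equivFun.symm.toEquiv.summable_iff.mpr this).congr fun c => ?_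
  simp [gam, add_comm]

end ThetaExpansion

section Family

variable {l r : ℕ} (b : Module.Basis (Fin l) ℝ (Evec l)) (k : ℕ) (τ : ℂ) (μ : Fin r → Evec l)

lemma smul_gam_sub_eq_zero_iff (hk : k ≠ 0)
    (hsep : ∀ i j : Fin r, i ≠ j → ¬∃ β ∈ latt b, μ i - μ j = (k : ℝ) • β) {i₀ : Fin r}
    {p : Fin r × (Fin l → ℤ)} : (k : ℝ) • gam b k (μ p.1) p.2 - μ i₀ = 0 ↔ p = (i₀, 0) := by
  obtain ⟨i, c⟩ := p
  refine ⟨fun h => ?_, fun h => ?_⟩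
  · obtain rfl : i = i₀ := by_contra fun hi =>
      hsep i i₀ hi (exists_mem_latt_of_smul_gam_eq b k (μ i) hk (sub_eq_zero.mp h))
    simpa [smul_gam b k _ hk, b.sum_zsmul_eq_zero_iff, hk] using h
  · obtain ⟨rfl, rfl⟩ := Prod.mk.inj h
    simp [smul_gam b k _ hk]

variable (g : Fin r → ℂ)

lemma summable_norm_mul_thetaCoeff (hk : 0 < k) (hτ : 0 < τ.im) :
    Summable fun p : Fin r × (Fin l → ℤ) => ‖g p.1 * thetaCoeff b k (μ p.1) τ p.2‖ := by
  refine (summable_prod_of_nonneg fun _ => norm_nonneg _).mpr ⟨fun i => ?_, .of_finite⟩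
  simpa only [norm_mul] using (summable_norm_thetaCoeff b k (μ i) τ hk hτ).mul_left ‖g i‖

lemma tsum_mul_thetaCoeff_mul_cexp (hk : 0 < k) (hτ : 0 < τ.im) (ν u : Evec l) (t : ℝ) :
    ∑' p : Fin r × (Fin l → ℤ), g p.1 * thetaCoeff b k (μ p.1) τ p.2
        * cexp (2 * π * I * ⟪(k : ℝ) • gam b k (μ p.1) p.2 - ν, u⟫_ℝ * t)
      = (∑ i, g i * theta b k (μ i) τ (toC (t • u))) * cexp (2 * π * I * (-⟪ν, u⟫_ℝ : ℝ) * t) := by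
  have hsummable := (summable_norm_mul_thetaCoeff b k τ μ g hk hτ).of_norm_bounded fun p =>
    (show ‖g p.1 * thetaCoeff b k (μ p.1) τ p.2
        * cexp (2 * π * I * ⟪(k : ℝ) • gam b k (μ p.1) p.2 - ν, u⟫_ℝ * t)‖ = _ by
      rw [norm_mul, norm_cexp_two_pi_I_mul_mul, mul_one]).le
  rw [hsummable.tsum_prod, tsum_fintype, Finset.sum_mul]
  refine Finset.sum_congr rfl fun i _ => ?_
  rw [mul_assoc (g i), theta_toC_smul_mul_cexp, ← tsum_mul_left]
  simp only [mul_assoc]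

end Family

theorem stmt6_general {l r : ℕ} (b : Module.Basis (Fin l) ℝ (Evec l)) (k : ℕ) (hk : 0 < k)
    (τ : ℂ) (hτ : 0 < τ.im) (μ : Fin r → Evec l)
    (hsep : ∀ i j : Fin r, i ≠ j → ¬∃ β ∈ latt b, μ i - μ j = (k : ℝ) • β) :
    LinearIndependent ℂ (fun i : Fin r => (fun v : EvecC l => theta b k (μ i) τ v)) := by
  rw [Fintype.linearIndependent_iff]
  intro g hg i₀
  obtain ⟨u, hu⟩ := exists_inner_ne_zero
    fun p : Fin r × (Fin l → ℤ) => (k : ℝ) • gam b k (μ p.1) p.2 - μ i₀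
  have hfreq : ∀ p : Fin r × (Fin l → ℤ),
      ⟪(k : ℝ) • gam b k (μ p.1) p.2 - μ i₀, u⟫_ℝ = 0 ↔ p = (i₀, 0) := fun p =>
    ⟨fun h => (smul_gam_sub_eq_zero_iff b k μ hk.ne' hsep).mp (by_contra fun hne => hu p hne h),
      fun h => by rw [(smul_gam_sub_eq_zero_iff b k μ hk.ne' hsep).mpr h, inner_zero_left]⟩
  have hzero (t : ℝ) : ∑' p : Fin r × (Fin l → ℤ), g p.1 * thetaCoeff b k (μ p.1) τ p.2
      * cexp (2 * π * I * ⟪(k : ℝ) • gam b k (μ p.1) p.2 - μ i₀, u⟫_ℝ * t) = 0 := by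
    have hsum := congrFun hg (toC (t • u))
    simp only [Finset.sum_apply, Pi.smul_apply, smul_eq_mul, Pi.zero_apply] at hsum
    rw [tsum_mul_thetaCoeff_mul_cexp b k τ μ g hk hτ, hsum, zero_mul]
  simpa [thetaCoeff, Complex.exp_ne_zero] using eq_zero_of_tsum_cexp_eq_zero _
    (summable_norm_mul_thetaCoeff b k τ μ g hk hτ) hfreq hzero

/-- Fix a positive integer `k` and `τ ∈ ℍ`.  If `μ₁, …, μ_r ∈ M*` are such
that `μᵢ − μⱼ ∉ kM` whenever `i ≠ j`, then the functions `v ↦ Θ_{μᵢ,k}(v;τ)` on `V_ℂ` are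
linearly independent over `ℂ`. -/
theorem stmt6 {l r : ℕ} (b : Module.Basis (Fin l) ℝ (Evec l)) (k : ℕ) (hk : 0 < k)
    (τ : ℂ) (hτ : 0 < τ.im) (μ : Fin r → Evec l) (hμ : ∀ i, μ i ∈ dualLatt b)
    (hsep : ∀ i j : Fin r, i ≠ j → ¬∃ β ∈ latt b, μ i - μ j = (k : ℝ) • β) :
    LinearIndependent ℂ (fun i : Fin r => (fun v : EvecC l => theta b k (μ i) τ v)) :=
  stmt6_general b k hk τ hτ μ hsep
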